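/- Let R₃ ⊆ Hom_R(H, 𝔱) be the submodule spanned by the maps γ_{s,t} : x ↦ ν(x, e_s ∧ e_t) for 1 ≤ s < t ≤ 2g, and let N ⊆ Hom_R(H, Λ²H) be the submodule consisting of the maps f_b : x ↦ x ∧ b for b ∈ H. Then, under the isomorphism 𝒜 ≅ Aut(L₃) induced by the action (F, f, A)·(α, a, v) = ( 2·F(Av) + (A ⊗ Λ²A)(α) + Υ_f( 2·f(Av) + 2·Λ²A(a) ), 2·f(Av) + Λ²A(a), Av ), the inner automorphism group Inn(L₃) corresponds to the subset R₃ × N × {id_H} of 𝒜. -/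

import Mathlib

/-!
Conjugation by `y = (α, a, v)` in `L₃` is
`(β, b, w) ↦ (β + ν(v, b) - ν(w, a) + ½ ν(v, v ∧ w), b + v ∧ w, w)`, and the inverse of `y` is `-y`.
Since `ν` vanishes on cyclic sums, `Υ_{f_b} = -ν(b, ·)` for `f_b = (· ∧ b)`. Comparing with the
action formula at the points `(0, 0, w)` shows that `(F, f, A)` acts as conjugation by `y` exactly
when `A = 1`, `f = f_{-v/2}` and `F = ν(·, -a/2)`. Finally the maps `ν(·, c)`, `c ∈ Λ²H`, form the
span of the `γ_{s,t}` because the `e_s ∧ e_t` with `s < t` span `Λ²H`.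
-/

namespace Paper

open ExteriorAlgebra

open scoped TensorProduct

variable {R : Type*} [CommRing R] {H : Type*} [AddCommGroup H] [Module R H]

theorem wedge_mem (v w : H) : ι R v * ι R w ∈ ⋀[R]^2 H := by
  rw [show (⋀[R]^2 H) = LinearMap.range (ι R (M := H)) * LinearMap.range (ι R (M := H)) from
    sq _]
  exact Submodule.mul_mem_mul (LinearMap.mem_range_self _ v) (LinearMap.mem_range_self _ w)

/-- The wedge product `H × H → Λ²H` as a bilinear map. -/
noncomputable def wedge : H →ₗ[R] H →ₗ[R] ↥(⋀[R]^2 H) :=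
  LinearMap.mk₂ R (fun v w => ⟨ι R v * ι R w, wedge_mem v w⟩)
    (fun v v' w => Subtype.ext (by simp [add_mul]))
    (fun c v w => Subtype.ext (by simp [smul_mul_assoc]))
    (fun v w w' => Subtype.ext (by simp [mul_add]))
    (fun c v w => Subtype.ext (by simp [mul_smul_comm]))

/-- The submodule `𝔱 ⊆ H ⊗ Λ²H` spanned by the elements `u⊗(v∧w) − v⊗(w∧u)`. -/
noncomputable def tSub (R : Type*) [CommRing R] (H : Type*) [AddCommGroup H] [Module R H] :
    Submodule R (H ⊗[R] ↥(⋀[R]^2 H)) :=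
  Submodule.span R
    {x | ∃ u v w : H, x = u ⊗ₜ[R] (wedge v w) - v ⊗ₜ[R] (wedge w u)}

theorem map_exteriorPower_le (f : H →ₗ[R] H) (n : ℕ) :
    Submodule.map (ExteriorAlgebra.map f).toLinearMap (⋀[R]^n H) ≤ ⋀[R]^n H := by
  rw [show ((⋀[R]^n H : Submodule R (ExteriorAlgebra R H))) =
      (LinearMap.range (ι R (M := H))) ^ n from rfl, Submodule.map_pow]
  have h1 : Submodule.map (ExteriorAlgebra.map f).toLinearMap
      (LinearMap.range (ι R (M := H))) ≤ LinearMap.range (ι R (M := H)) := by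
    intro x hx
    rw [Submodule.mem_map] at hx
    obtain ⟨y, hy, rfl⟩ := hx
    rw [LinearMap.mem_range] at hy
    obtain ⟨v, rfl⟩ := hy
    exact ⟨f v, (map_apply_ι f v).symm⟩
  induction n with
  | zero => simp
  | succ n ih =>
      rw [pow_succ, pow_succ]
      exact mul_le_mul' ih h1

/-- The endomorphism `Λ²f` of `Λ²H` induced by an endomorphism `f` of `H`. -/
noncomputable def map2 (f : H →ₗ[R] H) : ↥(⋀[R]^2 H) →ₗ[R] ↥(⋀[R]^2 H) :=
  (ExteriorAlgebra.map f).toLinearMap.restrict (p := ⋀[R]^2 H) (q := ⋀[R]^2 H)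
    (fun x hx => map_exteriorPower_le f 2 (Submodule.mem_map_of_mem hx))

theorem map2_wedge (f : H →ₗ[R] H) (v w : H) :
    map2 f (wedge (R := R) v w) = wedge (R := R) (f v) (f w) :=
  Subtype.ext (by simp [map2, LinearMap.restrict_apply, wedge, map_apply_ι])

theorem tSub_stable (A : H →ₗ[R] H) (x : H ⊗[R] ↥(⋀[R]^2 H)) (hx : x ∈ tSub R H) :
    TensorProduct.map A (map2 A) x ∈ tSub R H := by
  induction hx using Submodule.span_induction with
  | mem y hy =>
      obtain ⟨u, v, w, rfl⟩ := hy
      rw [map_sub, TensorProduct.map_tmul, TensorProduct.map_tmul, map2_wedge, map2_wedge]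
      exact Submodule.subset_span ⟨A u, A v, A w, rfl⟩
  | zero => simpa using Submodule.zero_mem _
  | add a b ha hb iha ihb => rw [map_add]; exact Submodule.add_mem _ iha ihb
  | smul c a ha iha => rw [map_smul]; exact Submodule.smul_mem _ _ iha

/-- The action of an endomorphism `A` of `H` on `𝔱 ⊆ H ⊗ Λ²H`, by `A ⊗ Λ²A`. -/
noncomputable def tRestrict (A : H →ₗ[R] H) : ↥(tSub R H) →ₗ[R] ↥(tSub R H) :=
  (TensorProduct.map A (map2 A)).restrict (p := tSub R H) (q := tSub R H) (tSub_stable A)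


/-- Helper instances for the submodule `𝔱` (typeclass search struggles with the nested
subtype). -/
noncomputable instance tSubAddCommGroup : AddCommGroup ↥(tSub R H) :=
  @Submodule.addCommGroup R (H ⊗[R] ↥(⋀[R]^2 H)) _ _ _ (tSub R H)

noncomputable instance tSubModule : Module R ↥(tSub R H) :=
  @Submodule.module R (H ⊗[R] ↥(⋀[R]^2 H)) _ _ _ (tSub R H)

section A3

variable [Invertible (2 : R)] [Invertible (3 : R)]

/-- The action `(A·f)(u) = Λ²A(f(A⁻¹u))` of `GL(H)` on `Hom(H, Λ²H)`. -/
noncomputable def actf (A : H ≃ₗ[R] H) (f : H →ₗ[R] ↥(⋀[R]^2 H)) : H →ₗ[R] ↥(⋀[R]^2 H) :=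
  map2 (A : H →ₗ[R] H) ∘ₗ f ∘ₗ (A.symm : H →ₗ[R] H)

/-- The action `(A·F)(u) = (A ⊗ Λ²A)(F(A⁻¹u))` of `GL(H)` on `Hom(H, 𝔱)`. -/
noncomputable def actF (A : H ≃ₗ[R] H) (F : H →ₗ[R] ↥(tSub R H)) : H →ₗ[R] ↥(tSub R H) :=
  tRestrict (A : H →ₗ[R] H) ∘ₗ F ∘ₗ (A.symm : H →ₗ[R] H)

/-- The multiplication on `𝒜 = Hom(H, 𝔱) × Hom(H, Λ²H) × GL(H)`:
`(F', f', A')·(F, f, A) = (F' + A'·F + Υ_{f'} ∘ (A'·f) − Υ_{A'·f} ∘ f', f' + A'·f, A'A)`. -/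
noncomputable def aMul (Υ : (H →ₗ[R] ↥(⋀[R]^2 H)) → (↥(⋀[R]^2 H) →ₗ[R] ↥(tSub R H)))
    (x y : (H →ₗ[R] ↥(tSub R H)) × (H →ₗ[R] ↥(⋀[R]^2 H)) × (H ≃ₗ[R] H)) :
    (H →ₗ[R] ↥(tSub R H)) × (H →ₗ[R] ↥(⋀[R]^2 H)) × (H ≃ₗ[R] H) :=
  (x.1 + actF x.2.2 y.1 + Υ x.2.1 ∘ₗ actf x.2.2 y.2.1 - Υ (actf x.2.2 y.2.1) ∘ₗ x.2.1,
    x.2.1 + actf x.2.2 y.2.1,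
    x.2.2 * y.2.2)

/-- The multiplication on `L₃ = 𝔱 × Λ²H × H`. -/
noncomputable def l3mul (ν : H →ₗ[R] ↥(⋀[R]^2 H) →ₗ[R] ↥(tSub R H))
    (x y : ↥(tSub R H) × ↥(⋀[R]^2 H) × H) : ↥(tSub R H) × ↥(⋀[R]^2 H) × H :=
  (x.1 + y.1 + ⅟(2 : R) • ν x.2.2 y.2.1 - ⅟(2 : R) • ν y.2.2 x.2.1 +
      (⅟(2 : R) * ⅟(2 : R) * ⅟(3 : R)) • ν x.2.2 (wedge (R := R) x.2.2 y.2.2) +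
      (⅟(2 : R) * ⅟(2 : R) * ⅟(3 : R)) • ν y.2.2 (wedge (R := R) y.2.2 x.2.2),
    x.2.1 + y.2.1 + ⅟(2 : R) • wedge (R := R) x.2.2 y.2.2,
    x.2.2 + y.2.2)

end A3

section Wedge

theorem wedge_self (v : H) : wedge (R := R) v v = 0 :=
  Subtype.ext (ι_sq_zero v)

theorem wedge_swap (v w : H) : wedge (R := R) w v = -wedge (R := R) v w :=
  Subtype.ext (eq_neg_of_add_eq_zero_left (ι_add_mul_swap w v))

theorem ιMulti_eq_wedge (a : Fin 2 → H) :
    exteriorPower.ιMulti R 2 a = wedge (R := R) (a 0) (a 1) :=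
  Subtype.ext (by simp [ιMulti_apply, wedge, Matrix.vecTail])

theorem span_range_wedge :
    Submodule.span R (Set.range fun p : H × H => wedge (R := R) p.1 p.2) = ⊤ := by
  rw [eq_top_iff, ← exteriorPower.ιMulti_span R 2 H, Submodule.span_le]
  rintro _ ⟨a, rfl⟩
  rw [ιMulti_eq_wedge]
  exact Submodule.subset_span ⟨(a 0, a 1), rfl⟩

theorem ext_wedge {M : Type*} [AddCommGroup M] [Module R M] {φ ψ : ↥(⋀[R]^2 H) →ₗ[R] M}
    (h : ∀ u v : H, φ (wedge (R := R) u v) = ψ (wedge (R := R) u v)) : φ = ψ :=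
  LinearMap.ext_on span_range_wedge (by rintro _ ⟨⟨u, v⟩, rfl⟩; exact h u v)

theorem span_basis_wedge {I : Type*} [LinearOrder I] (e : Module.Basis I R H) :
    Submodule.span R {c | ∃ s t : I, s < t ∧ c = wedge (R := R) (e s) (e t)} = ⊤ := by
  set S := Submodule.span R {c | ∃ s t : I, s < t ∧ c = wedge (R := R) (e s) (e t)}
  have hbasis : ∀ s t, wedge (R := R) (e s) (e t) ∈ S := by
    intro s t
    rcases lt_trichotomy s t with h | rfl | h
    · exact Submodule.subset_span ⟨s, t, h, rfl⟩
    · rw [wedge_self]; exact zero_mem S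
    · rw [wedge_swap]; exact neg_mem (Submodule.subset_span ⟨t, s, h, rfl⟩)
  rw [eq_top_iff, ← exteriorPower.ιMulti_span_of_span R 2 H e.span_eq, Submodule.span_le]
  rintro _ ⟨a, ha, rfl⟩
  obtain ⟨s, hs⟩ := ha ⟨0, rfl⟩
  obtain ⟨t, ht⟩ := ha ⟨1, rfl⟩
  rw [ιMulti_eq_wedge, ← hs, ← ht]
  exact hbasis s t

theorem span_map_basis_wedge {I M : Type*} [LinearOrder I] [AddCommGroup M] [Module R M]
    (e : Module.Basis I R H) (φ : ↥(⋀[R]^2 H) →ₗ[R] M) :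
    Submodule.span R {m | ∃ s t : I, s < t ∧ m = φ (wedge (R := R) (e s) (e t))} =
      LinearMap.range φ := by
  rw [LinearMap.range_eq_map, ← span_basis_wedge e, Submodule.map_span]
  congr 1
  ext m
  constructor
  · rintro ⟨s, t, hst, rfl⟩
    exact ⟨_, ⟨s, t, hst, rfl⟩, rfl⟩
  · rintro ⟨_, ⟨s, t, hst, rfl⟩, rfl⟩
    exact ⟨s, t, hst, rfl⟩

theorem map2_id : map2 (LinearMap.id : H →ₗ[R] H) = LinearMap.id :=
  LinearMap.ext fun x => Subtype.ext (by simp [map2, LinearMap.restrict_apply])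

theorem tRestrict_id : tRestrict (LinearMap.id : H →ₗ[R] H) = LinearMap.id :=
  LinearMap.ext fun x => Subtype.ext (by simp [tRestrict, LinearMap.restrict_apply, map2_id])

end Wedge

section Nu

variable (ν : H →ₗ[R] ↥(⋀[R]^2 H) →ₗ[R] ↥(tSub R H))

theorem nu_cyclic [Invertible (3 : R)]
    (hν : ∀ u v w : H,
      (↑(ν u (wedge (R := R) v w)) : H ⊗[R] ↥(⋀[R]^2 H)) =
        ((2 : R) * ⅟(3 : R)) • u ⊗ₜ[R] wedge (R := R) v w -
          ⅟(3 : R) • v ⊗ₜ[R] wedge (R := R) w u -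
          ⅟(3 : R) • w ⊗ₜ[R] wedge (R := R) u v)
    (u v w : H) :
    ν u (wedge (R := R) v w) + ν v (wedge (R := R) w u) + ν w (wedge (R := R) u v) = 0 := by
  apply Subtype.ext
  rw [Submodule.coe_add, Submodule.coe_add, hν, hν, hν, Submodule.coe_zero]
  module

theorem upsilon_flip_wedge
    (hcyc : ∀ u v w : H,
      ν u (wedge (R := R) v w) + ν v (wedge (R := R) w u) + ν w (wedge (R := R) u v) = 0)
    (Υ : (H →ₗ[R] ↥(⋀[R]^2 H)) → (↥(⋀[R]^2 H) →ₗ[R] ↥(tSub R H)))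
    (hΥ : ∀ (f : H →ₗ[R] ↥(⋀[R]^2 H)) (u v : H),
      Υ f (wedge (R := R) u v) = ν u (f v) - ν v (f u))
    (b : H) : Υ (wedge.flip b) = -ν b := by
  refine ext_wedge fun u v => ?_
  rw [hΥ, LinearMap.flip_apply, LinearMap.flip_apply, LinearMap.neg_apply, wedge_swap b u,
    map_neg, sub_neg_eq_add, eq_neg_iff_add_eq_zero, ← hcyc b u v]
  abel

end Nu

section L3

variable [Invertible (2 : R)] [Invertible (3 : R)]

section Conj

variable (ν : H →ₗ[R] ↥(⋀[R]^2 H) →ₗ[R] ↥(tSub R H))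

theorem l3mul_neg_self (y : ↥(tSub R H) × ↥(⋀[R]^2 H) × H) : l3mul ν y (-y) = 0 := by
  obtain ⟨α, a, v⟩ := y
  simp only [l3mul, Prod.neg_mk, map_neg, LinearMap.neg_apply, wedge_self, map_zero, smul_zero,
    smul_neg, neg_zero, add_zero, zero_add, add_neg_cancel, sub_neg_eq_add, neg_add_cancel,
    Prod.mk_zero_zero]

theorem neg_l3mul_self (y : ↥(tSub R H) × ↥(⋀[R]^2 H) × H) : l3mul ν (-y) y = 0 := by
  simpa only [neg_neg] using l3mul_neg_self ν (-y)

theorem eq_neg_of_l3mul_eq_zero {y z : ↥(tSub R H) × ↥(⋀[R]^2 H) × H} (h : l3mul ν y z = 0) :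
    z = -y := by
  obtain ⟨α, a, v⟩ := y
  obtain ⟨β, b, w⟩ := z
  have hw : w = -v := eq_neg_of_add_eq_zero_right (congrArg (·.2.2) h)
  subst hw
  have hb : b = -a := eq_neg_of_add_eq_zero_right <| by
    simpa only [l3mul, Prod.snd_zero, Prod.fst_zero, map_neg, wedge_self, neg_zero, smul_zero,
      add_zero] using congrArg (·.2.1) h
  subst hb
  have hβ : β = -α := eq_neg_of_add_eq_zero_right <| by
    simpa only [l3mul, Prod.fst_zero, map_neg, LinearMap.neg_apply, wedge_self, neg_zero,
      map_zero, smul_zero, smul_neg, sub_neg_eq_add, add_zero, neg_add_cancel_right] using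
      congrArg (·.1) h
  rw [hβ, Prod.neg_mk, Prod.neg_mk]

theorem l3mul_l3mul_neg (α : ↥(tSub R H)) (a : ↥(⋀[R]^2 H)) (v : H)
    (β : ↥(tSub R H)) (b : ↥(⋀[R]^2 H)) (w : H) :
    l3mul ν (l3mul ν (α, a, v) (β, b, w)) (-(α, a, v)) =
      (β + ν v b - ν w a + ⅟(2 : R) • ν v (wedge (R := R) v w), b + wedge (R := R) v w, w) := by
  have h2 : (2 : R) * ⅟(2 : R) = 1 := mul_invOf_self 2
  have h3 : (3 : R) * ⅟(3 : R) = 1 := mul_invOf_self 3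
  simp only [l3mul, Prod.neg_mk, map_add, map_neg, map_smul, LinearMap.add_apply,
    LinearMap.neg_apply, wedge_self, smul_neg, neg_neg, zero_add, neg_zero, wedge_swap v w]
  refine Prod.ext ?_ (Prod.ext ?_ ?_)
  · dsimp only
    match_scalars <;> first
      | ring1
      | linear_combination h2
      | linear_combination -h2
      | linear_combination ⅟(2 : R) * ⅟(2 : R) * h3 + ⅟(2 : R) * h2
  · dsimp only
    match_scalars <;> first | ring1 | linear_combination h2
  · dsimp only
    abel

noncomputable def autAction (Υ : (H →ₗ[R] ↥(⋀[R]^2 H)) → (↥(⋀[R]^2 H) →ₗ[R] ↥(tSub R H)))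
    (F : H →ₗ[R] ↥(tSub R H)) (f : H →ₗ[R] ↥(⋀[R]^2 H)) (A : H ≃ₗ[R] H)
    (x : ↥(tSub R H) × ↥(⋀[R]^2 H) × H) : ↥(tSub R H) × ↥(⋀[R]^2 H) × H :=
  ((2 : R) • F (A x.2.2) + tRestrict (A : H →ₗ[R] H) x.1 +
      Υ f ((2 : R) • f (A x.2.2) + (2 : R) • map2 (A : H →ₗ[R] H) x.2.1),
    (2 : R) • f (A x.2.2) + map2 (A : H →ₗ[R] H) x.2.1,
    A x.2.2)

variable {ν} {Υ : (H →ₗ[R] ↥(⋀[R]^2 H)) → (↥(⋀[R]^2 H) →ₗ[R] ↥(tSub R H))}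

theorem autAction_flip_eq_conj (hΥ : ∀ b, Υ (wedge.flip b) = -ν b) (c : ↥(⋀[R]^2 H)) (b : H)
    (x : ↥(tSub R H) × ↥(⋀[R]^2 H) × H) :
    autAction Υ (ν.flip c) (wedge.flip b) 1 x =
      l3mul ν (l3mul ν (0, (-2 : R) • c, (-2 : R) • b) x) (-(0, (-2 : R) • c, (-2 : R) • b)) := by
  obtain ⟨β, b', w⟩ := x
  have h2 : ⅟(2 : R) * 2 = 1 := invOf_mul_self 2
  rw [l3mul_l3mul_neg]
  simp only [autAction, LinearEquiv.coe_toLinearMap_one, map2_id, tRestrict_id,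
    LinearMap.id_apply, LinearEquiv.coe_one, id_eq, hΥ, LinearMap.flip_apply, wedge_swap b w,
    map_add, map_neg, map_smul, LinearMap.neg_apply, LinearMap.smul_apply]
  refine Prod.ext ?_ (Prod.ext ?_ rfl)
  · dsimp only
    match_scalars <;> first | ring1 | linear_combination -2 * h2
  · dsimp only
    match_scalars <;> ring1

theorem eq_flip_of_autAction_eq_conj (hΥ : ∀ b, Υ (wedge.flip b) = -ν b)
    {F : H →ₗ[R] ↥(tSub R H)} {f : H →ₗ[R] ↥(⋀[R]^2 H)} {A : H ≃ₗ[R] H}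
    (y : ↥(tSub R H) × ↥(⋀[R]^2 H) × H)
    (h : ∀ x, autAction Υ F f A x = l3mul ν (l3mul ν y x) (-y)) :
    F = ν.flip (-⅟(2 : R) • y.2.1) ∧ f = wedge.flip (-⅟(2 : R) • y.2.2) ∧ A = 1 := by
  obtain ⟨α, a, v⟩ := y
  have h2 : ⅟(2 : R) * 2 = 1 := invOf_mul_self 2
  have hw : ∀ w, autAction Υ F f A (0, 0, w) =
      (-ν w a + ⅟(2 : R) • ν v (wedge (R := R) v w), wedge (R := R) v w, w) := by
    intro w
    rw [h, l3mul_l3mul_neg, map_zero, zero_add, zero_add, zero_sub]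
  have hA : A = 1 := LinearEquiv.ext fun w => congrArg (·.2.2) (hw w)
  subst hA
  have hf : f = wedge.flip (-⅟(2 : R) • v) := by
    refine LinearMap.ext fun w => ?_
    have hfw := congrArg (·.2.1) (hw w)
    simp only [autAction, LinearEquiv.coe_toLinearMap_one, map2_id, LinearEquiv.coe_one, id_eq,
      map_zero, add_zero] at hfw
    refine (isUnit_of_invertible (2 : R)).smul_left_cancel.1 ?_
    rw [hfw, LinearMap.flip_apply, map_smul, wedge_swap v w]
    match_scalars
    linear_combination -h2
  subst hf
  have hF : F = ν.flip (-⅟(2 : R) • a) := by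
    refine LinearMap.ext fun w => ?_
    have hFw := congrArg (·.1) (hw w)
    simp only [autAction, hΥ] at hFw
    simp only [LinearEquiv.coe_toLinearMap_one, map2_id, tRestrict_id, LinearEquiv.coe_one,
      id_eq, map_zero, smul_zero, add_zero, LinearMap.flip_apply, map_smul, wedge_swap v w,
      map_neg, LinearMap.neg_apply, LinearMap.smul_apply] at hFw
    refine (isUnit_of_invertible (2 : R)).smul_left_cancel.1 ?_
    rw [LinearMap.flip_apply, map_smul]
    linear_combination (norm := match_scalars) hFw
    · ring1
    · linear_combination h2
    · linear_combination -⅟(2 : R) * h2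
  exact ⟨hF, rfl, rfl⟩

end Conj

theorem stmt14_general {g : ℕ}
    (e : Module.Basis (Fin (2 * g)) R H)
    (ν : H →ₗ[R] ↥(⋀[R]^2 H) →ₗ[R] ↥(tSub R H))
    (hν : ∀ u v w : H,
      (↑(ν u (wedge (R := R) v w)) : H ⊗[R] ↥(⋀[R]^2 H)) =
        ((2 : R) * ⅟(3 : R)) • u ⊗ₜ[R] wedge (R := R) v w -
          ⅟(3 : R) • v ⊗ₜ[R] wedge (R := R) w u -
          ⅟(3 : R) • w ⊗ₜ[R] wedge (R := R) u v)
    (Υ : (H →ₗ[R] ↥(⋀[R]^2 H)) → (↥(⋀[R]^2 H) →ₗ[R] ↥(tSub R H)))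
    (hΥ : ∀ (f : H →ₗ[R] ↥(⋀[R]^2 H)) (u v : H),
      Υ f (wedge (R := R) u v) = ν u (f v) - ν v (f u))
    (Θ : ((H →ₗ[R] ↥(tSub R H)) × (H →ₗ[R] ↥(⋀[R]^2 H)) × (H ≃ₗ[R] H)) ≃
        {σ : (↥(tSub R H) × ↥(⋀[R]^2 H) × H) ≃ (↥(tSub R H) × ↥(⋀[R]^2 H) × H) //
          ∀ x y, σ (l3mul ν x y) = l3mul ν (σ x) (σ y)})
    (hΘ1 : ∀ (F : H →ₗ[R] ↥(tSub R H)) (f : H →ₗ[R] ↥(⋀[R]^2 H)) (A : H ≃ₗ[R] H)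
        (α : ↥(tSub R H)) (a : ↥(⋀[R]^2 H)) (v : H),
      (Θ (F, f, A)).1 (α, a, v) =
        ((2 : R) • F (A v) + tRestrict (A : H →ₗ[R] H) α +
            Υ f ((2 : R) • f (A v) + (2 : R) • map2 (A : H →ₗ[R] H) a),
          (2 : R) • f (A v) + map2 (A : H →ₗ[R] H) a,
          A v)) :
    ∀ (F : H →ₗ[R] ↥(tSub R H)) (f : H →ₗ[R] ↥(⋀[R]^2 H)) (A : H ≃ₗ[R] H),
      (∃ y z : ↥(tSub R H) × ↥(⋀[R]^2 H) × H,
          l3mul ν y z = (0, 0, 0) ∧ l3mul ν z y = (0, 0, 0) ∧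
            ∀ x, (Θ (F, f, A)).1 x = l3mul ν (l3mul ν y x) z) ↔
        (F ∈ Submodule.span R
            {F' : H →ₗ[R] ↥(tSub R H) | ∃ s t : Fin (2 * g), s < t ∧
              F' = LinearMap.flip ν (wedge (R := R) (e s) (e t))} ∧
          f ∈ LinearMap.range (LinearMap.flip (wedge (R := R) (H := H))) ∧
          A = 1) := by
  intro F f A
  have hΘ : ∀ F f A x, (Θ (F, f, A)).1 x = autAction Υ F f A x :=
    fun F f A ⟨α, a, v⟩ => hΘ1 F f A α a v
  have hΥflip := upsilon_flip_wedge ν (nu_cyclic ν hν) Υ hΥ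
  rw [span_map_basis_wedge e ν.flip]
  constructor
  · rintro ⟨y, z, hyz, -, hconj⟩
    obtain rfl := eq_neg_of_l3mul_eq_zero ν hyz
    obtain ⟨rfl, rfl, rfl⟩ :=
      eq_flip_of_autAction_eq_conj hΥflip y fun x => (hΘ F f A x).symm.trans (hconj x)
    exact ⟨⟨_, rfl⟩, ⟨_, rfl⟩, rfl⟩
  · rintro ⟨⟨c, rfl⟩, ⟨b, rfl⟩, rfl⟩
    let y : ↥(tSub R H) × ↥(⋀[R]^2 H) × H := (0, (-2 : R) • c, (-2 : R) • b)
    refine ⟨y, -y, l3mul_neg_self ν y, neg_l3mul_self ν y, fun x => ?_⟩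
    rw [hΘ, autAction_flip_eq_conj hΥflip c b x]

/-- Under the isomorphism `𝒜 ≅ Aut(L₃)` of Statement 12 (any equivalence
`Θ` realizing the action formula and compatible with the `𝒜`-multiplication), the inner
automorphism group `Inn(L₃)` corresponds to the subset `R₃ × N × {id_H}` of `𝒜`, where
`R₃ ⊆ Hom(H, 𝔱)` is spanned by the maps `γ_{s,t} : x ↦ ν(x, e_s ∧ e_t)` (`s < t`) and
`N ⊆ Hom(H, Λ²H)` consists of the maps `f_b : x ↦ x ∧ b`. -/
theorem stmt14 (P : Ideal ℤ) [P.IsPrime] (hP2 : (2 : ℤ) ∉ P) (hP3 : (3 : ℤ) ∉ P)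
    [Algebra ℤ R] [IsLocalization.AtPrime R P] {g : ℕ} (hg : 1 ≤ g)
    (e : Module.Basis (Fin (2 * g)) R H)
    (ν : H →ₗ[R] ↥(⋀[R]^2 H) →ₗ[R] ↥(tSub R H))
    (hν : ∀ u v w : H,
      (↑(ν u (wedge (R := R) v w)) : H ⊗[R] ↥(⋀[R]^2 H)) =
        ((2 : R) * ⅟(3 : R)) • u ⊗ₜ[R] wedge (R := R) v w -
          ⅟(3 : R) • v ⊗ₜ[R] wedge (R := R) w u -
          ⅟(3 : R) • w ⊗ₜ[R] wedge (R := R) u v)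
    (Υ : (H →ₗ[R] ↥(⋀[R]^2 H)) → (↥(⋀[R]^2 H) →ₗ[R] ↥(tSub R H)))
    (hΥ : ∀ (f : H →ₗ[R] ↥(⋀[R]^2 H)) (u v : H),
      Υ f (wedge (R := R) u v) = ν u (f v) - ν v (f u))
    (Θ : ((H →ₗ[R] ↥(tSub R H)) × (H →ₗ[R] ↥(⋀[R]^2 H)) × (H ≃ₗ[R] H)) ≃
        {σ : (↥(tSub R H) × ↥(⋀[R]^2 H) × H) ≃ (↥(tSub R H) × ↥(⋀[R]^2 H) × H) //
          ∀ x y, σ (l3mul ν x y) = l3mul ν (σ x) (σ y)})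
    (hΘ1 : ∀ (F : H →ₗ[R] ↥(tSub R H)) (f : H →ₗ[R] ↥(⋀[R]^2 H)) (A : H ≃ₗ[R] H)
        (α : ↥(tSub R H)) (a : ↥(⋀[R]^2 H)) (v : H),
      (Θ (F, f, A)).1 (α, a, v) =
        ((2 : R) • F (A v) + tRestrict (A : H →ₗ[R] H) α +
            Υ f ((2 : R) • f (A v) + (2 : R) • map2 (A : H →ₗ[R] H) a),
          (2 : R) • f (A v) + map2 (A : H →ₗ[R] H) a,
          A v))
    (hΘ2 : ∀ x y, (Θ (aMul Υ x y)).1 = ((Θ y).1.trans (Θ x).1)) :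
    ∀ (F : H →ₗ[R] ↥(tSub R H)) (f : H →ₗ[R] ↥(⋀[R]^2 H)) (A : H ≃ₗ[R] H),
      (∃ y z : ↥(tSub R H) × ↥(⋀[R]^2 H) × H,
          l3mul ν y z = (0, 0, 0) ∧ l3mul ν z y = (0, 0, 0) ∧
            ∀ x, (Θ (F, f, A)).1 x = l3mul ν (l3mul ν y x) z) ↔
        (F ∈ Submodule.span R
            {F' : H →ₗ[R] ↥(tSub R H) | ∃ s t : Fin (2 * g), s < t ∧
              F' = LinearMap.flip ν (wedge (R := R) (e s) (e t))} ∧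
          f ∈ LinearMap.range (LinearMap.flip (wedge (R := R) (H := H))) ∧
          A = 1) :=
  stmt14_general e ν hν Υ hΥ Θ hΘ1

end L3

end Paper
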